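/- arXiv:1906.07884 — 2 statements merged into one kernel-verified Lean document; each statement's English description precedes it below -/
import Mathlib

section
/- The ½-percentile of (T, μ, r₀, r₁), when it exists, coincides with the median of (T, μ). -/
open MeasureTheory

/-- A connected component of the complement of a point is a Borel set. -/
lemma measurableSet_connectedComponentIn
    {T : Type*} [TopologicalSpace T] [T1Space T] [MeasurableSpace T] [BorelSpace T]
    (x y : T) (hy : y ≠ x) :
    MeasurableSet (connectedComponentIn ({x}ᶜ : Set T) y) := by
  have hU : IsOpen ({x}ᶜ : Set T) := isOpen_compl_singleton
  have hyU : y ∈ ({x}ᶜ : Set T) := hy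
  rw [connectedComponentIn_eq_image hyU]
  obtain ⟨F, hF, hFeq⟩ := isClosed_induced_iff.mp
    (isClosed_connectedComponent (x := (⟨y, hyU⟩ : ({x}ᶜ : Set T))) )
  rw [← hFeq]
  have : (Subtype.val '' (Subtype.val ⁻¹' F : Set ({x}ᶜ : Set T))) = ({x}ᶜ : Set T) ∩ F :=
    Subtype.image_preimage_coe _ _
  rw [this]
  exact hU.measurableSet.inter hF.measurableSet

/-- The `½`-percentile, when it exists, is the median. -/
theorem half_percentile_is_median
    {T : Type*} [TopologicalSpace T] [CompactSpace T] [ConnectedSpace T] [T2Space T]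
    [MeasurableSpace T] [BorelSpace T]
    (htree : ∀ x y : T, x ≠ y → ∃ z : T, z ≠ x ∧ z ≠ y ∧
      connectedComponentIn ({z}ᶜ : Set T) x ≠ connectedComponentIn ({z}ᶜ : Set T) y)
    (hfin : ∀ x : T, Set.Finite
      {C : Set T | ∃ y : T, y ≠ x ∧ C = connectedComponentIn ({x}ᶜ : Set T) y})
    (μ : Measure T) [IsProbabilityMeasure μ]
    (hna : ∀ x : T, μ {x} = 0)
    (r₀ r₁ : T) (hroots : r₀ ≠ r₁)
    (x : T)
    (hx : x ≠ r₀ ∧ x ≠ r₁ ∧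
      connectedComponentIn ({x}ᶜ : Set T) r₀ ≠ connectedComponentIn ({x}ᶜ : Set T) r₁ ∧
      μ (connectedComponentIn ({x}ᶜ : Set T) r₀) = 1 / 2) :
    ∀ y : T, y ≠ x → μ (connectedComponentIn ({x}ᶜ : Set T) y) ≤ 1 / 2 := by
  obtain ⟨hxr₀, hxr₁, hcc, hmeas⟩ := hx
  intro y hy
  by_cases hcase : connectedComponentIn ({x}ᶜ : Set T) y
      = connectedComponentIn ({x}ᶜ : Set T) r₀
  · rw [hcase, hmeas]
  · -- the two components are disjoint
    have hsub : connectedComponentIn ({x}ᶜ : Set T) y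
        ⊆ (connectedComponentIn ({x}ᶜ : Set T) r₀)ᶜ := by
      intro z hz hz'
      have h1 := connectedComponentIn_eq hz
      have h2 := connectedComponentIn_eq hz'
      first
      | exact hcase (h1.symm.trans h2)
      | exact hcase (h1.trans h2.symm)
    have hm : MeasurableSet (connectedComponentIn ({x}ᶜ : Set T) r₀) :=
      measurableSet_connectedComponentIn x r₀ (Ne.symm hxr₀)
    calc μ (connectedComponentIn ({x}ᶜ : Set T) y)
        ≤ μ (connectedComponentIn ({x}ᶜ : Set T) r₀)ᶜ := measure_mono hsub
      _ = 1 - μ (connectedComponentIn ({x}ᶜ : Set T) r₀) := by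
          rw [measure_compl hm (measure_ne_top μ _), measure_univ]
      _ = 1 / 2 := by rw [hmeas]; simp [ENNReal.one_sub_inv_two]
end

section
/- Let r : G → ℝ be a nontrivial homogeneous quasimorphism vanishing on a subgroup S, and suppose |r(g)| ≤ C·h(g) for a function h : G → [0,∞) (entropy). Then the induced invariant on cosets h̄(gS) := inf{h(f) : f ∈ gS} is unbounded on G/S; in particular for every h₀ > 0 there is a coset gS with h̄(gS) > h₀. -/
/-- If a nontrivial homogeneous quasimorphism `r` with defect `D` vanishes on a
subgroup `S` and satisfies `|r| ≤ C·h` for `h ≥ 0`, then the induced invariant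
`h̄(gS) = inf {h f : f ∈ gS}` on left cosets is unbounded: for every `h₀ > 0` there
is a coset on which it exceeds `h₀`. -/
theorem coset_entropy_invariant_unbounded
    {G : Type*} [Group G] (S : Subgroup G) (r : G → ℝ) (D C : ℝ) (h : G → ℝ)
    (hq : ∀ f g : G, |r (f * g) - r f - r g| ≤ D)
    (hhom : ∀ (g : G) (m : ℤ), r (g ^ m) = (m : ℝ) * r g)
    (hS : ∀ s ∈ S, r s = 0)
    (hnontriv : ∃ g : G, r g ≠ 0)
    (hC : 0 < C)
    (hnonneg : ∀ g : G, 0 ≤ h g)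
    (hLip : ∀ g : G, |r g| ≤ C * h g) :
    ∀ h₀ : ℝ, 0 < h₀ → ∃ g : G,
      h₀ < sInf (h '' {f : G | g⁻¹ * f ∈ S}) := by
  intro h₀ hh₀
  obtain ⟨g₀, hg₀⟩ := hnontriv
  have habs : 0 < |r g₀| := abs_pos.mpr hg₀
  obtain ⟨m, hm⟩ := exists_nat_gt ((C * h₀ + D) / |r g₀|)
  set g : G := g₀ ^ (m : ℤ) with hg
  have hrg : |r g| = (m : ℝ) * |r g₀| := by
    rw [hg, hhom, abs_mul, abs_of_nonneg (by positivity : (0:ℝ) ≤ ((m:ℤ):ℝ))]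
    push_cast; ring
  have hbig : C * h₀ + D < |r g| := by
    rw [hrg]
    calc C * h₀ + D = ((C * h₀ + D) / |r g₀|) * |r g₀| := by
          field_simp
      _ < (m : ℝ) * |r g₀| := by
          exact mul_lt_mul_of_pos_right hm habs
  refine ⟨g, ?_⟩
  have hB : h₀ < (|r g| - D) / C := by
    rw [lt_div_iff₀ hC]
    linarith
  refine lt_of_lt_of_le hB ?_
  apply le_csInf
  · exact ⟨h g, ⟨g, by simp [Set.mem_setOf_eq, S.one_mem], rfl⟩⟩
  · rintro b ⟨f, hf, rfl⟩
    have hs : r (g⁻¹ * f) = 0 := hS _ hf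
    have := hq g (g⁻¹ * f)
    rw [hs, mul_inv_cancel_left] at this
    have h1 : |r g| - D ≤ |r f| := by
      have h2 : |r f - r g| ≤ D := by simpa using this
      have h3 := abs_sub_abs_le_abs_sub (r g) (r f)
      rw [abs_sub_comm] at h3
      linarith
    have := hLip f
    rw [div_le_iff₀ hC]
    linarith [mul_comm C (h f)]
end
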